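/- Let M be the real hypersurface in ℂ³ defined by v = z₁z₂z̄₁ + z₁z̄₁z̄₂ + z₁²z̄₂ + z₂z̄₁², where w = u + iv. Then the real part of the vector field X = i z₁ ∂_{z₂} is tangent to M at every point of M. -/
import Mathlib


open Complex

/-- The real part of `X = i z₁ ∂_{z₂}` is tangent to the model hypersurface
`v = z₁z₂z̄₁ + z₁z̄₁z̄₂ + z₁²z̄₂ + z₂z̄₁²` of branch (A''.ii.1). -/
theorem stmt_6 :
    ∀ p : ℂ × ℂ × ℂ,
      (-(p.2.2.im) + (p.1 * p.2.1 * (starRingEnd ℂ) p.1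
          + p.1 * (starRingEnd ℂ) p.1 * (starRingEnd ℂ) p.2.1
          + p.1 ^ 2 * (starRingEnd ℂ) p.2.1
          + p.2.1 * ((starRingEnd ℂ) p.1) ^ 2).re) = 0 →
      fderiv ℝ (fun q : ℂ × ℂ × ℂ =>
          -(q.2.2.im) + (q.1 * q.2.1 * (starRingEnd ℂ) q.1
            + q.1 * (starRingEnd ℂ) q.1 * (starRingEnd ℂ) q.2.1
            + q.1 ^ 2 * (starRingEnd ℂ) q.2.1
            + q.2.1 * ((starRingEnd ℂ) q.1) ^ 2).re) p (0, Complex.I * p.1, 0) = 0 := by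
  intro p _
  set f : ℂ × ℂ × ℂ → ℝ := fun q =>
    -(q.2.2.im) + (q.1 * q.2.1 * (starRingEnd ℂ) q.1
      + q.1 * (starRingEnd ℂ) q.1 * (starRingEnd ℂ) q.2.1
      + q.1 ^ 2 * (starRingEnd ℂ) q.2.1
      + q.2.1 * ((starRingEnd ℂ) q.1) ^ 2).re with hf
  have hre : ∀ g : ℂ × ℂ × ℂ → ℂ, DifferentiableAt ℝ g p →
      DifferentiableAt ℝ (fun q => (g q).re) p := fun g hg =>
    Complex.reCLM.differentiableAt.comp p hg
  have h1 : DifferentiableAt ℝ (fun q : ℂ × ℂ × ℂ => q.1) p := differentiableAt_fst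
  have h2 : DifferentiableAt ℝ (fun q : ℂ × ℂ × ℂ => q.2.1) p := differentiableAt_snd.fst
  have h1c : DifferentiableAt ℝ (fun q : ℂ × ℂ × ℂ => (starRingEnd ℂ) q.1) p :=
    Complex.conjCLE.differentiable.differentiableAt.comp p h1
  have h2c : DifferentiableAt ℝ (fun q : ℂ × ℂ × ℂ => (starRingEnd ℂ) q.2.1) p :=
    Complex.conjCLE.differentiable.differentiableAt.comp p h2
  have hdiff : DifferentiableAt ℝ f p := by
    refine DifferentiableAt.add ?_ (hre _ ?_)
    · exact (Complex.imCLM.differentiableAt.comp p (differentiableAt_snd.snd)).neg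
    · exact ((((h1.mul h2).mul h1c).add ((h1.mul h1c).mul h2c)).add
        ((h1.pow 2).mul h2c)).add (h2.mul (h1c.pow 2))
  rw [← hdiff.lineDeriv_eq_fderiv]
  have hconst : (fun t : ℝ => f (p + t • ((0 : ℂ), Complex.I * p.1, (0 : ℂ))))
      = fun _ => f p := by
    funext t
    have hc : p.1 * (p.2.1 + (t : ℂ) * (Complex.I * p.1)) * (starRingEnd ℂ) p.1
        + p.1 * (starRingEnd ℂ) p.1 * (starRingEnd ℂ) (p.2.1 + (t : ℂ) * (Complex.I * p.1))
        + p.1 ^ 2 * (starRingEnd ℂ) (p.2.1 + (t : ℂ) * (Complex.I * p.1))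
        + (p.2.1 + (t : ℂ) * (Complex.I * p.1)) * ((starRingEnd ℂ) p.1) ^ 2
        = p.1 * p.2.1 * (starRingEnd ℂ) p.1
          + p.1 * (starRingEnd ℂ) p.1 * (starRingEnd ℂ) p.2.1
          + p.1 ^ 2 * (starRingEnd ℂ) p.2.1
          + p.2.1 * ((starRingEnd ℂ) p.1) ^ 2 := by
      simp only [map_add, map_mul, Complex.conj_I, Complex.conj_ofReal]
      ring
    simp only [hf, Prod.fst_add, Prod.snd_add, Prod.smul_fst, Prod.smul_snd,
      smul_zero, add_zero, Complex.real_smul, hc]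
  rw [lineDeriv, hconst, deriv_const]
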